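/- arXiv:1803.07683 — 3 statements merged into one kernel-verified Lean document; each statement's English description precedes it below -/
import Mathlib

section
/- For every ONE-IN-THREE 3SAT instance φ, the set S_φ = {(x, y) ∈ (Fin n → ℝ) × ℝ : (ε i 0 · x (v i 0) + ε i 1 · x (v i 1) + ε i 2 · x (v i 2) + 1)·y = 0 for all i ∈ Fin k, 1 - (x j)^2 = 0 for all j ∈ Fin n, and y < 1} is a closed subset of ℝ^{n+1} if and only if φ is not satisfiable. -/
open Finset Filter

/-- Sign of a literal: `1` if positive, `-1` if negated. -/
noncomputable def Eps (c : Bool) : ℝ := if c then 1 else -1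

/-- A ONE-IN-THREE 3SAT instance, encoded by a variable-index map `v` and a sign map `b`,
is satisfiable if some Boolean assignment makes exactly one literal true in each clause. -/
def OneInThreeSat {n k : ℕ} (v : Fin k → Fin 3 → Fin n) (b : Fin k → Fin 3 → Bool) : Prop :=
  ∃ a : Fin n → Bool, ∀ i : Fin k, ∃! t : Fin 3, a (v i t) = b i t

/-- The quartic polynomial `s_φ` associated with a ONE-IN-THREE 3SAT instance. -/
noncomputable def sPhi {n k : ℕ} (v : Fin k → Fin 3 → Fin n) (b : Fin k → Fin 3 → Bool)
    (x : Fin n → ℝ) : ℝ :=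
  (∑ i : Fin k,
    (Eps (b i 0) * x (v i 0) + Eps (b i 1) * x (v i 1) + Eps (b i 2) * x (v i 2) + 1) ^ 2)
  + ∑ j : Fin n, (1 - x j ^ 2) ^ 2

/-- The set `S_φ` from the proof of Theorem 3.3. -/
noncomputable def Sset {n k : ℕ} (v : Fin k → Fin 3 → Fin n) (b : Fin k → Fin 3 → Bool) :
    Set ((Fin n → ℝ) × ℝ) :=
  {q | (∀ i : Fin k,
          (Eps (b i 0) * q.1 (v i 0) + Eps (b i 1) * q.1 (v i 1)
            + Eps (b i 2) * q.1 (v i 2) + 1) * q.2 = 0) ∧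
       (∀ j : Fin n, 1 - q.1 j ^ 2 = 0) ∧ q.2 < 1}


lemma eps_mul (c d : Bool) : Eps c * (if d then (1:ℝ) else -1) = if d = c then 1 else -1 := by
  cases c <;> cases d <;> simp [Eps]

lemma euiff (p : Fin 3 → Prop) : (∃! t, p t) ↔
    (p 0 ∧ ¬p 1 ∧ ¬p 2) ∨ (¬p 0 ∧ p 1 ∧ ¬p 2) ∨ (¬p 0 ∧ ¬p 1 ∧ p 2) := by
  constructor
  · rintro ⟨t, ht, hu⟩
    fin_cases t
    · exact Or.inl ⟨ht, fun h => absurd (hu 1 h) (by decide), fun h => absurd (hu 2 h) (by decide)⟩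
    · exact Or.inr (Or.inl ⟨fun h => absurd (hu 0 h) (by decide), ht, fun h => absurd (hu 2 h) (by decide)⟩)
    · exact Or.inr (Or.inr ⟨fun h => absurd (hu 0 h) (by decide), fun h => absurd (hu 1 h) (by decide), ht⟩)
  · rintro (⟨h0,h1,h2⟩|⟨h0,h1,h2⟩|⟨h0,h1,h2⟩)
    · exact ⟨0, h0, fun t ht => by fin_cases t <;> simp_all⟩
    · exact ⟨1, h1, fun t ht => by fin_cases t <;> simp_all⟩
    · exact ⟨2, h2, fun t ht => by fin_cases t <;> simp_all⟩

lemma key (p : Fin 3 → Prop) [∀ t, Decidable (p t)] :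
    ((if p 0 then (1:ℝ) else -1) + (if p 1 then 1 else -1) + (if p 2 then 1 else -1) + 1 = 0)
      ↔ ∃! t, p t := by
  rw [euiff]
  by_cases h0 : p 0 <;> by_cases h1 : p 1 <;> by_cases h2 : p 2 <;>
    simp [h0, h1, h2] <;> norm_num

lemma clause_iff {n k : ℕ} (v : Fin k → Fin 3 → Fin n) (b : Fin k → Fin 3 → Bool)
    (x : Fin n → ℝ) (a : Fin n → Bool) (hx : ∀ j, x j = if a j then 1 else -1) (i : Fin k) :
    Eps (b i 0) * x (v i 0) + Eps (b i 1) * x (v i 1) + Eps (b i 2) * x (v i 2) + 1 = 0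
      ↔ ∃! t : Fin 3, a (v i t) = b i t := by
  have e : ∀ t : Fin 3, Eps (b i t) * x (v i t) = if a (v i t) = b i t then 1 else -1 :=
    fun t => by rw [hx]; exact eps_mul _ _
  rw [e 0, e 1, e 2]
  exact key (fun t => a (v i t) = b i t)


theorem Sset_closed_iff_not_satisfiable {n k : ℕ}
    (v : Fin k → Fin 3 → Fin n) (b : Fin k → Fin 3 → Bool) :
    IsClosed (Sset v b) ↔ ¬ OneInThreeSat v b := by
  constructor
  · intro hclosed hsat
    obtain ⟨a, ha⟩ := hsat
    set x : Fin n → ℝ := fun j => if a j then 1 else -1 with hxdef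
    have hx : ∀ j, x j = if a j then 1 else -1 := fun j => rfl
    have hzero : ∀ i : Fin k,
        Eps (b i 0) * x (v i 0) + Eps (b i 1) * x (v i 1) + Eps (b i 2) * x (v i 2) + 1 = 0 :=
      fun i => (clause_iff v b x a hx i).mpr (ha i)
    have hsq : ∀ j, 1 - x j ^ 2 = 0 := by
      intro j; rw [hx]; cases a j <;> norm_num
    have hcont : Continuous (fun y : ℝ => ((x, y) : (Fin n → ℝ) × ℝ)) :=
      continuous_const.prodMk continuous_id
    have hpre : (fun y : ℝ => ((x, y) : (Fin n → ℝ) × ℝ)) ⁻¹' Sset v b = Set.Iio 1 := by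
      ext y
      simp only [Set.mem_preimage, Sset, Set.mem_setOf_eq, Set.mem_Iio]
      constructor
      · rintro ⟨-, -, h⟩; exact h
      · intro h
        exact ⟨fun i => by rw [hzero i, zero_mul], hsq, h⟩
    have hc : IsClosed (Set.Iio (1:ℝ)) := by rw [← hpre]; exact hclosed.preimage hcont
    have h2 := hc.closure_eq
    rw [closure_Iio] at h2
    have h1 : (1:ℝ) ∈ Set.Iio 1 := by rw [← h2]; exact Set.self_mem_Iic
    simp at h1
  · intro hns
    have hS : Sset v b = (⋂ j, {q : (Fin n → ℝ) × ℝ | 1 - q.1 j ^ 2 = 0}) ∩ {q | q.2 = 0} := by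
      ext ⟨x, y⟩
      simp only [Sset, Set.mem_setOf_eq, Set.mem_inter_iff, Set.mem_iInter]
      constructor
      · rintro ⟨hcl, hsq, hy⟩
        refine ⟨hsq, ?_⟩
        by_contra hy0
        apply hns
        refine ⟨fun j => decide (x j = 1), fun i => ?_⟩
        have hx : ∀ j, x j = if decide (x j = 1) then 1 else -1 := by
          intro j
          have h2 : x j = 1 ∨ x j = -1 := by
            have := hsq j
            have hxx : x j * x j = 1 := by nlinarith [sq_nonneg (x j)]
            exact mul_self_eq_one_iff.mp hxx
          rcases h2 with h | h <;> rw [h] <;> norm_num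
        rw [← clause_iff v b x _ hx i]
        rcases mul_eq_zero.mp (hcl i) with h | h
        · exact h
        · exact absurd h hy0
      · rintro ⟨hsq, hy⟩
        exact ⟨fun i => by rw [hy, mul_zero], hsq, by rw [hy]; norm_num⟩
    rw [hS]
    exact (isClosed_iInter fun j =>
        isClosed_eq (by fun_prop) continuous_const).inter
      (isClosed_eq continuous_snd continuous_const)
end

section
/- For every ONE-IN-THREE 3SAT instance φ, the set T_φ = {(x, y) ∈ (Fin n → ℝ) × ℝ : (ε i 0 · x (v i 0) + ε i 1 · x (v i 1) + ε i 2 · x (v i 2) + 1)·y = 0 for all i ∈ Fin k, 1 - (x j)^2 = 0 for all j ∈ Fin n, and -1 ≤ y < 1} is a bounded subset of ℝ^{n+1}, and T_φ is closed if and only if φ is not satisfiable. -/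
open Finset Filter

/-- The bounded variant `T_φ` of the set from the proof of Theorem 3.3 (Remark 3.4). -/
noncomputable def Tset {n k : ℕ} (v : Fin k → Fin 3 → Fin n) (b : Fin k → Fin 3 → Bool) :
    Set ((Fin n → ℝ) × ℝ) :=
  {q | (∀ i : Fin k,
          (Eps (b i 0) * q.1 (v i 0) + Eps (b i 1) * q.1 (v i 1)
            + Eps (b i 2) * q.1 (v i 2) + 1) * q.2 = 0) ∧
       (∀ j : Fin n, 1 - q.1 j ^ 2 = 0) ∧ -1 ≤ q.2 ∧ q.2 < 1}

lemma eu3 (p : Fin 3 → Prop) : (∃! t, p t) ↔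
    ((p 0 ∧ ¬p 1 ∧ ¬p 2) ∨ (¬p 0 ∧ p 1 ∧ ¬p 2) ∨ (¬p 0 ∧ ¬p 1 ∧ p 2)) := by
  constructor
  · rintro ⟨t, ht, hu⟩
    fin_cases t
    · exact Or.inl ⟨ht, fun h1 => by simpa using hu 1 h1, fun h2 => by simpa using hu 2 h2⟩
    · exact Or.inr (Or.inl ⟨fun h0 => by simpa using hu 0 h0, ht, fun h2 => by simpa using hu 2 h2⟩)
    · exact Or.inr (Or.inr ⟨fun h0 => by simpa using hu 0 h0, fun h1 => by simpa using hu 1 h1, ht⟩)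
  · rintro (⟨h0, h1, h2⟩ | ⟨h0, h1, h2⟩ | ⟨h0, h1, h2⟩)
    · exact ⟨0, h0, fun y hy => by fin_cases y <;> first | rfl | exact absurd hy h1 | exact absurd hy h2⟩
    · exact ⟨1, h1, fun y hy => by fin_cases y <;> first | rfl | exact absurd hy h0 | exact absurd hy h2⟩
    · exact ⟨2, h2, fun y hy => by fin_cases y <;> first | rfl | exact absurd hy h0 | exact absurd hy h1⟩

lemma sum3_zero_iff (e : Fin 3 → ℝ) (p : Fin 3 → Prop)
    (h1 : ∀ t, e t = 1 ↔ p t) (h2 : ∀ t, e t = 1 ∨ e t = -1) :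
    (e 0 + e 1 + e 2 + 1 = 0) ↔ (∃! t, p t) := by
  rw [eu3]
  simp only [← h1]
  rcases h2 0 with a0 | a0 <;> rcases h2 1 with a1 | a1 <;> rcases h2 2 with a2 | a2 <;>
    rw [a0, a1, a2] <;> norm_num

lemma lit (x : ℝ) (hx : x = 1 ∨ x = -1) (c : Bool) :
    (Eps c * x = 1 ↔ (decide (x = 1) = c)) ∧ (Eps c * x = 1 ∨ Eps c * x = -1) := by
  rcases hx with h | h <;> cases c <;> simp [Eps, h] <;> norm_num

theorem Tset_bounded_and_closed_iff_not_satisfiable {n k : ℕ}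
    (v : Fin k → Fin 3 → Fin n) (b : Fin k → Fin 3 → Bool) :
    Bornology.IsBounded (Tset v b) ∧
    (IsClosed (Tset v b) ↔ ¬ OneInThreeSat v b) := by
  constructor
  · -- boundedness
    refine (Metric.isBounded_closedBall (x := (0 : (Fin n → ℝ) × ℝ)) (r := 1)).subset ?_
    rintro ⟨x, y⟩ ⟨-, hx, hy1, hy2⟩
    rw [Metric.mem_closedBall, dist_zero_right, Prod.norm_def]
    apply max_le
    · rw [pi_norm_le_iff_of_nonneg zero_le_one]
      intro j
      have := hx j
      rw [Real.norm_eq_abs, abs_le]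
      constructor <;> nlinarith
    · rw [Real.norm_eq_abs, abs_le]
      exact ⟨hy1, hy2.le⟩
  constructor
  · -- closed → not satisfiable
    rintro hc ⟨a, ha⟩
    set x : Fin n → ℝ := fun j => if a j then 1 else -1 with hxdef
    have hx : ∀ j, x j = 1 ∨ x j = -1 := fun j => by
      by_cases h : a j <;> simp [hxdef, h]
    have hdec : ∀ j, decide (x j = 1) = a j := fun j => by
      by_cases h : a j <;> simp [hxdef, h] <;> norm_num
    have hcoef : ∀ i : Fin k,
        Eps (b i 0) * x (v i 0) + Eps (b i 1) * x (v i 1) + Eps (b i 2) * x (v i 2) + 1 = 0 := by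
      intro i
      have := (sum3_zero_iff (fun t => Eps (b i t) * x (v i t)) (fun t => a (v i t) = b i t)
        (fun t => by rw [(lit (x (v i t)) (hx _) (b i t)).1, hdec])
        (fun t => (lit (x (v i t)) (hx _) (b i t)).2)).2 (ha i)
      exact this
    -- sequence in Tset converging to (x, 1)
    have hmem : ∀ m : ℕ, ((x, 1 - 1 / ((m : ℝ) + 1)) : (Fin n → ℝ) × ℝ) ∈ Tset v b := by
      intro m
      refine ⟨fun i => by rw [hcoef i, zero_mul], fun j => ?_, ?_, ?_⟩
      · show 1 - x j ^ 2 = 0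
        rcases hx j with h | h <;> rw [h] <;> norm_num
      · have : (1 : ℝ) / (m + 1) ≤ 1 := by
          rw [div_le_one (by positivity)]; linarith
        linarith
      · have : (0 : ℝ) < 1 / (m + 1) := by positivity
        linarith
    have htend : Tendsto (fun m : ℕ => ((x, 1 - 1 / ((m : ℝ) + 1)) : (Fin n → ℝ) × ℝ)) atTop
        (nhds (x, 1)) := by
      refine Tendsto.prodMk_nhds tendsto_const_nhds ?_
      have h0 : Tendsto (fun m : ℕ => (1 : ℝ) / (m + 1)) atTop (nhds 0) :=
        tendsto_one_div_add_atTop_nhds_zero_nat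
      have := tendsto_const_nhds (x := (1 : ℝ)) (f := atTop (α := ℕ)) |>.sub h0
      simpa using this
    have hlim : ((x, 1) : (Fin n → ℝ) × ℝ) ∈ Tset v b :=
      hc.mem_of_tendsto htend (Filter.Eventually.of_forall hmem)
    exact absurd hlim.2.2.2 (lt_irrefl 1)
  · -- not satisfiable → closed
    intro hns
    have heq : Tset v b = (⋂ j : Fin n, {q : (Fin n → ℝ) × ℝ | 1 - q.1 j ^ 2 = 0}) ∩
        {q : (Fin n → ℝ) × ℝ | q.2 = 0} := by
      ext ⟨x, y⟩
      simp only [Tset, Set.mem_setOf_eq, Set.mem_inter_iff, Set.mem_iInter]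
      constructor
      · rintro ⟨hcl, hx, hy1, hy2⟩
        refine ⟨hx, ?_⟩
        by_contra hy
        apply hns
        have hx' : ∀ j, x j = 1 ∨ x j = -1 := by
          intro j
          have := hx j
          rcases mul_eq_zero.1 (show (1 - x j) * (1 + x j) = 0 by nlinarith) with h | h
          · left; linarith
          · right; linarith
        refine ⟨fun j => decide (x j = 1), fun i => ?_⟩
        have hc0 : Eps (b i 0) * x (v i 0) + Eps (b i 1) * x (v i 1)
            + Eps (b i 2) * x (v i 2) + 1 = 0 := by
          rcases mul_eq_zero.1 (hcl i) with h | h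
          · exact h
          · exact absurd h hy
        exact (sum3_zero_iff (fun t => Eps (b i t) * x (v i t))
          (fun t => decide (x (v i t) = 1) = b i t)
          (fun t => (lit (x (v i t)) (hx' _) (b i t)).1)
          (fun t => (lit (x (v i t)) (hx' _) (b i t)).2)).1 hc0
      · rintro ⟨hx, hy⟩
        exact ⟨fun i => by rw [hy, mul_zero], hx, by rw [hy]; norm_num, by rw [hy]; norm_num⟩
    rw [heq]
    refine IsClosed.inter (isClosed_iInter fun j => ?_) (isClosed_eq continuous_snd continuous_const)
    exact isClosed_eq (by fun_prop) continuous_const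
end

section
/- Assume n ≥ 1. For every ONE-IN-THREE 3SAT instance φ, the following are equivalent: (a) for every (x₀, x) ∈ ℝ × (Fin n → ℝ) with x₀^2 + Σ_{j ∈ Fin n} (x j)^2 = 1, the quantity q_φ(x₀, x) := max over i ∈ Fin k and j ∈ Fin n of the numbers -c_i(x₀,x)^2, c_i(x₀,x)^2, x₀^2 - (x j)^2, (x j)^2 - x₀^2 is strictly positive; (b) φ is not satisfiable. -/
open Finset Filter

/-- The clause polynomial `c_i(x₀, x)` used in the homogenized constraints. -/
noncomputable def cClause {n k : ℕ} (v : Fin k → Fin 3 → Fin n) (b : Fin k → Fin 3 → Bool)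
    (x₀ : ℝ) (x : Fin n → ℝ) (i : Fin k) : ℝ :=
  Eps (b i 0) * x (v i 0) + Eps (b i 1) * x (v i 1) + Eps (b i 2) * x (v i 2) + x₀

/-- `q_φ(x₀, x)`: the maximum over `i ∈ Fin k`, `j ∈ Fin (n+1)` of the numbers
`-c_i(x₀,x)²`, `c_i(x₀,x)²`, `x₀² - x_j²`, `x_j² - x₀²`. -/
noncomputable def qPhi {n k : ℕ} (v : Fin k → Fin 3 → Fin (n + 1))
    (b : Fin k → Fin 3 → Bool) (x₀ : ℝ) (x : Fin (n + 1) → ℝ) : ℝ :=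
  Finset.univ.sup' ⟨Sum.inr ((0 : Fin (n + 1)), true), Finset.mem_univ _⟩
    (Sum.elim
      (fun p : Fin k × Bool =>
        if p.2 then (cClause v b x₀ x p.1) ^ 2 else -((cClause v b x₀ x p.1) ^ 2))
      (fun p : Fin (n + 1) × Bool =>
        if p.2 then x₀ ^ 2 - x p.1 ^ 2 else x p.1 ^ 2 - x₀ ^ 2))

/-! `q_φ(x₀, x) ≤ 0` means exactly that every `c_i(x₀, x)` vanishes and `x_j² = x₀²` for all `j`,
i.e. `x = x₀ · (ε(a_j))_j` for a Boolean assignment `a`. At such a point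
`c_i = (ε_{i0} ε(a_{v i 0}) + ε_{i1} ε(a_{v i 1}) + ε_{i2} ε(a_{v i 2}) + 1) · x₀`, and a sum of
three signs equals `-1` iff exactly one of them is `+1`, i.e. iff `a` makes exactly one literal
of clause `i` true. On the sphere `x₀ ≠ 0`, and conversely a satisfying `a` gives the point with
`x₀ = 1 / √(n + 2)`. -/

lemma eps_sq (c : Bool) : Eps c ^ 2 = 1 := by cases c <;> simp [Eps]

lemma eps_mul_eps (c d : Bool) : Eps c * Eps d = Eps (c == d) := by
  cases c <;> cases d <;> simp [Eps]

lemma existsUnique_iff_eps_sum_eq_neg_one (e : Fin 3 → Bool) :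
    (∃! t, e t = true) ↔ Eps (e 0) + Eps (e 1) + Eps (e 2) = -1 := by
  obtain ⟨p, q, r, rfl⟩ : ∃ p q r, e = ![p, q, r] :=
    ⟨e 0, e 1, e 2, by ext t; fin_cases t <;> rfl⟩
  cases p <;> cases q <;> cases r <;>
    simp [Eps, ExistsUnique, Fin.forall_fin_succ, Fin.exists_fin_succ] <;> norm_num

lemma forall_sq_eq_sq_iff_exists_sign {ι : Type*} (x₀ : ℝ) (x : ι → ℝ) :
    (∀ j, x j ^ 2 = x₀ ^ 2) ↔ ∃ a : ι → Bool, x = fun j => Eps (a j) * x₀ := by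
  constructor
  · intro h
    classical
    refine ⟨fun j => decide (x j = x₀), funext fun j => ?_⟩
    by_cases hj : x j = x₀
    · simp [hj, Eps]
    · have := (sq_eq_sq_iff_eq_or_eq_neg.1 (h j)).resolve_left hj
      simp [Eps, this]
  · rintro ⟨a, rfl⟩ j
    rw [mul_pow, eps_sq, one_mul]

lemma sq_add_sum_sq_signed {ι : Type*} [Fintype ι] (x₀ : ℝ) (a : ι → Bool) :
    x₀ ^ 2 + ∑ j, (Eps (a j) * x₀) ^ 2 = (Fintype.card ι + 1) * x₀ ^ 2 := by
  simp only [mul_pow, eps_sq, one_mul, Finset.sum_const, Finset.card_univ, nsmul_eq_mul]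
  ring

lemma cClause_signed {n k : ℕ} (v : Fin k → Fin 3 → Fin n) (b : Fin k → Fin 3 → Bool)
    (x₀ : ℝ) (a : Fin n → Bool) (i : Fin k) :
    cClause v b x₀ (fun j => Eps (a j) * x₀) i =
      (Eps (b i 0 == a (v i 0)) + Eps (b i 1 == a (v i 1)) + Eps (b i 2 == a (v i 2)) + 1) *
        x₀ := by
  simp only [cClause, ← eps_mul_eps]
  ring

lemma cClause_signed_eq_zero_iff {n k : ℕ} (v : Fin k → Fin 3 → Fin n)
    (b : Fin k → Fin 3 → Bool) {x₀ : ℝ} (hx₀ : x₀ ≠ 0) (a : Fin n → Bool) (i : Fin k) :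
    cClause v b x₀ (fun j => Eps (a j) * x₀) i = 0 ↔ ∃! t, a (v i t) = b i t := by
  rw [cClause_signed, mul_eq_zero, or_iff_left hx₀, add_eq_zero_iff_eq_neg,
    ← existsUnique_iff_eps_sum_eq_neg_one (fun t => b i t == a (v i t))]
  simp only [beq_iff_eq]
  exact existsUnique_congr fun _ => eq_comm

lemma qPhi_nonpos_iff {n k : ℕ} (v : Fin k → Fin 3 → Fin (n + 1)) (b : Fin k → Fin 3 → Bool)
    (x₀ : ℝ) (x : Fin (n + 1) → ℝ) :
    qPhi v b x₀ x ≤ 0 ↔ (∀ i, cClause v b x₀ x i = 0) ∧ ∀ j, x j ^ 2 = x₀ ^ 2 := by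
  refine (Finset.sup'_le_iff _ _).trans ?_
  simp only [Finset.mem_univ, true_implies, Sum.forall, Prod.forall,
    Bool.forall_bool, Sum.elim_inl, Sum.elim_inr, Bool.false_eq_true, if_false, if_true]
  refine and_congr (forall_congr' fun i => ?_) (forall_congr' fun j => ?_)
  · rw [neg_nonpos, sq_nonpos_iff, and_iff_right (sq_nonneg _)]
  · rw [sub_nonpos, sub_nonpos, ge_antisymm_iff]
    exact and_comm

lemma exists_sphere_qPhi_nonpos_iff {n k : ℕ} (v : Fin k → Fin 3 → Fin (n + 1))
    (b : Fin k → Fin 3 → Bool) :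
    (∃ (x₀ : ℝ) (x : Fin (n + 1) → ℝ), x₀ ^ 2 + ∑ j, x j ^ 2 = 1 ∧ qPhi v b x₀ x ≤ 0) ↔
      OneInThreeSat v b := by
  simp only [qPhi_nonpos_iff, forall_sq_eq_sq_iff_exists_sign]
  constructor
  · rintro ⟨x₀, -, hsphere, hc, a, rfl⟩
    have hx₀ : x₀ ≠ 0 := by
      rintro rfl
      simp at hsphere
    exact ⟨a, fun i => (cClause_signed_eq_zero_iff v b hx₀ a i).1 (hc i)⟩
  · rintro ⟨a, ha⟩
    set x₀ := Real.sqrt (1 / (n + 2))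
    have hx₀ : x₀ ^ 2 = 1 / (n + 2) := Real.sq_sqrt (by positivity)
    refine ⟨x₀, fun j => Eps (a j) * x₀, ?_, fun i => ?_, a, rfl⟩
    · rw [sq_add_sum_sq_signed, hx₀, Fintype.card_fin]
      field_simp
      push_cast
      ring
    · exact (cClause_signed_eq_zero_iff v b (by positivity) a i).2 (ha i)

theorem qPhi_positive_on_sphere_iff_not_satisfiable {n k : ℕ}
    (v : Fin k → Fin 3 → Fin (n + 1)) (b : Fin k → Fin 3 → Bool) :
    (∀ (x₀ : ℝ) (x : Fin (n + 1) → ℝ), x₀ ^ 2 + ∑ j : Fin (n + 1), x j ^ 2 = 1 →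
      0 < qPhi v b x₀ x) ↔ ¬ OneInThreeSat v b := by
  rw [← exists_sphere_qPhi_nonpos_iff]
  simp only [not_exists, not_and, not_le]
end
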